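/- Let F be a free group and α the periodicity abstraction as above. Then α(L₁ ∪ L₂) = α(α(L₁) ∪ α(L₂)) for all L₁, L₂ ⊆ F. -/

import Mathlib

/-!
Two distinct points lie in at most one coset `g⟨p⟩` with `p` primitive: if `x ≠ y` lie in
`g⟨p⟩ ∩ g'⟨q⟩`, then `x⁻¹ y` is a nontrivial power of both `p` and `q`. In a free group,
`p ^ k = q ^ m` forces `p` and `q` to be powers of a common element: writing the reduced word
of `x ^ n` as `c r ^ n c⁻¹` with `r` cyclically reduced, this is the Lyndon–Schützenberger
theorem for words. Primitivity then gives `q = p^{±1}`. Hence `α L` is the least of `∅`, a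
singleton, a primitive coset and `F` that contains `L`, and since `α Lᵢ` lies in every
primitive coset containing `Lᵢ`, the sets `L₁ ∪ L₂` and `α L₁ ∪ α L₂` have the same `α`.
-/

open scoped Pointwise

/-- An element `p` of a free group is primitive if it is nontrivial and its only
roots are `p` itself and `p⁻¹`. -/
def IsPrimitiveElt {A : Type*} (p : FreeGroup A) : Prop :=
  p ≠ 1 ∧ ∀ (w : FreeGroup A) (l : ℤ), w ^ l = p → w = p ∨ w = p⁻¹

/-- The coset `v·⟨p⟩ = {v * p^k : k ∈ ℤ}`. -/
def coset {A : Type*} (v p : FreeGroup A) : Set (FreeGroup A) :=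
  {x | ∃ k : ℤ, x = v * p ^ k}

/-- A free group element is cyclically reduced if its reduced word does not begin
and end with mutually inverse letters. -/
def CyclicallyReduced {A : Type*} [DecidableEq A] (w : FreeGroup A) : Prop :=
  ∀ x y : A × Bool, w.toWord.head? = some x → w.toWord.getLast? = some y →
    ¬(x.1 = y.1 ∧ x.2 = !y.2)

open scoped Classical in
/-- The periodicity abstraction. -/
noncomputable def alpha {A : Type*} (L : Set (FreeGroup A)) : Set (FreeGroup A) :=
  if L = ∅ then ∅
  else if ∃ g : FreeGroup A, L = {g} then L
  else if h : ∃ g p : FreeGroup A, IsPrimitiveElt p ∧ L ⊆ coset g p then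
    coset h.choose h.choose_spec.choose
  else Set.univ

namespace FreeMonoid

variable {β : Type*}

theorem toList_pow (u : FreeMonoid β) (n : ℕ) :
    toList (u ^ n) = (List.replicate n (toList u)).flatten := by
  rw [← List.prod_replicate, toList_prod, List.map_replicate]

theorem length_pow (u : FreeMonoid β) (n : ℕ) : (u ^ n).length = n * u.length := by
  simp [length, toList_pow]

theorem length_pos_of_ne_one {u : FreeMonoid β} (hu : u ≠ 1) : 0 < u.length :=
  Nat.pos_of_ne_zero (length_eq_zero.not.mpr hu)

theorem exists_eq_mul_of_mul_eq_mul {u v s t : FreeMonoid β} (h : u * s = v * t)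
    (hle : u.length ≤ v.length) : ∃ w, v = u * w := by
  have hu : toList u <+: toList (v * t) := h ▸ List.prefix_append _ _
  obtain ⟨w, hw⟩ := List.prefix_of_prefix_length_le hu (List.prefix_append _ _) hle
  exact ⟨ofList w, toList.injective hw.symm⟩

theorem exists_pow_eq_of_commute {u v : FreeMonoid β} (h : Commute u v) :
    ∃ (d : FreeMonoid β) (a b : ℕ), u = d ^ a ∧ v = d ^ b := by
  induction hn : u.length + v.length using Nat.strong_induction_on generalizing u v with
  | _ n ih =>
  wlog hle : u.length ≤ v.length generalizing u v
  · obtain ⟨d, a, b, hu, hv⟩ := this h.symm (by omega) (by omega)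
    exact ⟨d, b, a, hv, hu⟩
  rcases eq_or_ne u 1 with rfl | hu
  · exact ⟨v, 0, 1, by simp, by simp⟩
  obtain ⟨w, rfl⟩ := exists_eq_mul_of_mul_eq_mul h.eq hle
  have hw : Commute u w := by
    refine mul_left_cancel (a := u) ?_
    rw [h.eq, mul_assoc]
  have hlt : u.length + w.length < n := by
    have := length_pos_of_ne_one hu
    rw [← hn, length_mul]
    omega
  obtain ⟨d, a, b, rfl, rfl⟩ := ih _ hlt hw rfl
  exact ⟨d, a, a + b, rfl, by rw [pow_add]⟩

theorem exists_pow_eq_of_pow_eq_pow {u v : FreeMonoid β} {k m : ℕ} (hk : k ≠ 0) (hm : m ≠ 0)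
    (h : u ^ k = v ^ m) : ∃ (d : FreeMonoid β) (a b : ℕ), u = d ^ a ∧ v = d ^ b := by
  induction hn : u.length + v.length using Nat.strong_induction_on generalizing u v k m with
  | _ n ih =>
  wlog hle : u.length ≤ v.length generalizing u v k m
  · obtain ⟨d, a, b, hu, hv⟩ := this hm hk h.symm (by omega) (by omega)
    exact ⟨d, b, a, hv, hu⟩
  rcases eq_or_ne u 1 with rfl | hu
  · exact ⟨v, 0, 1, by simp, by simp⟩
  obtain ⟨w, rfl⟩ : ∃ w, v = u * w := by
    obtain ⟨k, rfl⟩ := Nat.exists_eq_add_one_of_ne_zero hk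
    obtain ⟨m, rfl⟩ := Nat.exists_eq_add_one_of_ne_zero hm
    exact exists_eq_mul_of_mul_eq_mul (by rwa [← pow_succ', ← pow_succ']) hle
  rcases eq_or_ne w 1 with rfl | hw
  · exact ⟨u, 1, 1, by simp, by simp⟩
  -- `u * w` and `u` both commute with `u ^ k = (u * w) ^ m`; cancelling `u` leaves `w`.
  have hwu : Commute w (u ^ k) := by
    have hv : Commute (u * w) (u ^ k) := h ▸ Commute.self_pow _ _
    refine mul_left_cancel (a := u) ?_
    rw [← mul_assoc, hv.eq, ← mul_assoc, ← (Commute.self_pow u k).eq, mul_assoc]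
  obtain ⟨d, a, b, rfl, hud⟩ := exists_pow_eq_of_commute hwu
  have ha : a ≠ 0 := by rintro rfl; exact hw (pow_zero d)
  have hb : b ≠ 0 := by
    rintro rfl
    have := congrArg length hud
    simp [length_pow, hk, length_pos_of_ne_one hu |>.ne'] at this
  have hlt : u.length + d.length < n := by
    have := length_pos_of_ne_one hu
    rw [← hn, length_mul, length_pow]
    nlinarith [Nat.one_le_iff_ne_zero.mpr ha]
  obtain ⟨e, p, q, rfl, rfl⟩ := ih _ hlt hk hb hud rfl
  exact ⟨e, p, p + q * a, rfl, by rw [← pow_mul, ← pow_add]⟩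

end FreeMonoid

namespace FreeGroup

open reduceCyclically

variable {α : Type*}

theorem mk_toList_pow (w : FreeMonoid (α × Bool)) (n : ℕ) :
    mk (FreeMonoid.toList (w ^ n)) = mk (FreeMonoid.toList w) ^ n := by
  induction n with
  | zero => rfl
  | succ n ih => rw [pow_succ, FreeMonoid.toList_mul, ← mul_mk, ih, pow_succ]

variable [DecidableEq α]

theorem conj_mk_reduceCyclically (x : FreeGroup α) :
    mk (conjugator x.toWord) * mk (reduceCyclically x.toWord) * (mk (conjugator x.toWord))⁻¹ =
      x := by
  rw [inv_mk, mul_mk, mul_mk, conj_conjugator_reduceCyclically, mk_toWord]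

theorem toWord_pow_of_ne_zero (x : FreeGroup α) {n : ℕ} (hn : n ≠ 0) :
    (x ^ n).toWord = conjugator x.toWord ++
      ((List.replicate n (reduceCyclically x.toWord)).flatten ++ invRev (conjugator x.toWord)) := by
  simp [toWord_pow, reduce_flatten_replicate, isReduced_toWord, hn]

theorem exists_pow_eq_of_pow_eq_pow {x y : FreeGroup α} {n m : ℕ} (hn : n ≠ 0) (hm : m ≠ 0)
    (h : x ^ n = y ^ m) : ∃ (z : FreeGroup α) (a b : ℕ), x = z ^ a ∧ y = z ^ b := by
  set cx := conjugator x.toWord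
  set cy := conjugator y.toWord
  set rx := reduceCyclically x.toWord
  set ry := reduceCyclically y.toWord
  have hword (j : ℕ) (hj : j ≠ 0) :
      cx ++ ((List.replicate (n * j) rx).flatten ++ invRev cx) =
        cy ++ ((List.replicate (m * j) ry).flatten ++ invRev cy) := by
    rw [← toWord_pow_of_ne_zero x (mul_ne_zero hn hj),
      ← toWord_pow_of_ne_zero y (mul_ne_zero hm hj), pow_mul, pow_mul, h]
  -- The lengths of the words of `x ^ n` and `x ^ (2 * n)` determine the length of the conjugator.
  have hlen : cx.length = cy.length := by
    have h₁ := congrArg List.length (hword 1 one_ne_zero)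
    have h₂ := congrArg List.length (hword 2 two_ne_zero)
    simp only [List.length_append, List.length_flatten, List.map_replicate,
      List.sum_replicate, smul_eq_mul, invRev_length] at h₁ h₂
    linarith
  obtain ⟨hc, hrest⟩ := List.append_inj (hword 1 one_ne_zero) hlen
  rw [hc] at hrest
  have hcore : FreeMonoid.ofList rx ^ n = FreeMonoid.ofList ry ^ m :=
    FreeMonoid.toList.injective <| by
      simpa [FreeMonoid.toList_pow] using List.append_cancel_right hrest
  obtain ⟨d, a, b, hda, hdb⟩ := FreeMonoid.exists_pow_eq_of_pow_eq_pow hn hm hcore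
  refine ⟨mk cx * mk d.toList * (mk cx)⁻¹, a, b, ?_, ?_⟩
  · rw [conj_pow, ← mk_toList_pow, ← hda, ← conj_mk_reduceCyclically x]
    rfl
  · rw [conj_pow, ← mk_toList_pow, ← hdb, hc, ← conj_mk_reduceCyclically y]
    rfl

theorem exists_zpow_eq_of_zpow_eq_zpow {x y : FreeGroup α} {k m : ℤ} (hk : k ≠ 0) (hm : m ≠ 0)
    (h : x ^ k = y ^ m) : ∃ (z : FreeGroup α) (a b : ℤ), x = z ^ a ∧ y = z ^ b := by
  have hsign {j : ℤ} (hj : j ≠ 0) (w : FreeGroup α) :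
      (w ^ j.sign) ^ j.natAbs = w ^ j ∧ (w ^ j.sign) ^ j.sign = w := by
    rw [← zpow_natCast, ← zpow_mul, ← zpow_mul, Int.sign_mul_natAbs, ← Int.sign_mul,
      Int.sign_eq_one_of_pos (mul_self_pos.2 hj), zpow_one]
    exact ⟨rfl, rfl⟩
  obtain ⟨z, a, b, hza, hzb⟩ := exists_pow_eq_of_pow_eq_pow (Int.natAbs_ne_zero.2 hk)
    (Int.natAbs_ne_zero.2 hm) (by rw [(hsign hk x).1, (hsign hm y).1, h])
  refine ⟨z, a * k.sign, b * m.sign, ?_, ?_⟩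
  · rw [zpow_mul, zpow_natCast, ← hza, (hsign hk x).2]
  · rw [zpow_mul, zpow_natCast, ← hzb, (hsign hm y).2]

end FreeGroup

section

variable {A : Type*}

theorem IsPrimitiveElt.eq_or_eq_inv_of_zpow_eq_zpow {p q : FreeGroup A} (hp : IsPrimitiveElt p)
    (hq : IsPrimitiveElt q) {k m : ℤ} (hk : k ≠ 0) (hm : m ≠ 0) (h : p ^ k = q ^ m) :
    q = p ∨ q = p⁻¹ := by
  classical
  obtain ⟨z, a, b, hza, hzb⟩ := FreeGroup.exists_zpow_eq_of_zpow_eq_zpow hk hm h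
  obtain ⟨c, hc⟩ : ∃ c : ℤ, q = p ^ c := by
    rcases hp.2 z a hza.symm with rfl | rfl
    · exact ⟨b, hzb⟩
    · exact ⟨-b, by rw [hzb, inv_zpow']⟩
  rcases hq.2 p c hc.symm with h | h
  · exact .inl h.symm
  · exact .inr (by rw [h, inv_inv])

theorem coset_eq_of_mem {g p x : FreeGroup A} (hx : x ∈ coset g p) : coset x p = coset g p := by
  obtain ⟨i, rfl⟩ := hx
  ext t
  constructor
  · rintro ⟨j, rfl⟩
    exact ⟨i + j, by rw [mul_assoc, zpow_add]⟩
  · rintro ⟨j, rfl⟩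
    exact ⟨j - i, by group⟩

theorem coset_inv (g p : FreeGroup A) : coset g p⁻¹ = coset g p := by
  ext t
  constructor
  · rintro ⟨j, rfl⟩
    exact ⟨-j, by rw [inv_zpow']⟩
  · rintro ⟨j, rfl⟩
    exact ⟨-j, by rw [inv_zpow', neg_neg]⟩

theorem exists_zpow_eq_inv_mul_of_mem_coset {g p x y : FreeGroup A} (hx : x ∈ coset g p)
    (hy : y ∈ coset g p) (hxy : x ≠ y) : ∃ k : ℤ, k ≠ 0 ∧ x⁻¹ * y = p ^ k := by
  obtain ⟨i, rfl⟩ := hx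
  obtain ⟨j, rfl⟩ := hy
  refine ⟨j - i, fun hji => hxy ?_, by group⟩
  rw [sub_eq_zero.1 hji]

theorem coset_eq_coset_of_nontrivial {L : Set (FreeGroup A)} {g g' p q : FreeGroup A}
    (hL : L.Nontrivial) (hp : IsPrimitiveElt p) (hq : IsPrimitiveElt q)
    (hLp : L ⊆ coset g p) (hLq : L ⊆ coset g' q) : coset g p = coset g' q := by
  obtain ⟨x, hx, y, hy, hxy⟩ := hL
  obtain ⟨i, hi, hpi⟩ := exists_zpow_eq_inv_mul_of_mem_coset (hLp hx) (hLp hy) hxy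
  obtain ⟨j, hj, hqj⟩ := exists_zpow_eq_inv_mul_of_mem_coset (hLq hx) (hLq hy) hxy
  have hqp : coset g' q = coset g' p := by
    rcases hp.eq_or_eq_inv_of_zpow_eq_zpow hq hi hj (hpi ▸ hqj) with rfl | rfl
    · rfl
    · exact coset_inv g' p
  have hx' : x ∈ coset g' p := hqp ▸ hLq hx
  rw [hqp, ← coset_eq_of_mem (hLp hx), coset_eq_of_mem hx']

theorem alpha_of_subsingleton {L : Set (FreeGroup A)} (hL : L.Subsingleton) : alpha L = L := by
  rcases hL.eq_empty_or_singleton with rfl | ⟨g, rfl⟩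
  · rw [alpha, if_pos rfl]
  · rw [alpha, if_neg (Set.singleton_nonempty g).ne_empty, if_pos ⟨g, rfl⟩]

theorem alpha_eq_coset {L : Set (FreeGroup A)} {g p : FreeGroup A} (hL : L.Nontrivial)
    (hp : IsPrimitiveElt p) (hLp : L ⊆ coset g p) : alpha L = coset g p := by
  have h : ∃ g p : FreeGroup A, IsPrimitiveElt p ∧ L ⊆ coset g p := ⟨g, p, hp, hLp⟩
  rw [alpha, if_neg hL.nonempty.ne_empty, if_neg (not_exists.2 fun _ => hL.ne_singleton),
    dif_pos h]
  exact coset_eq_coset_of_nontrivial hL h.choose_spec.choose_spec.1 hp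
    h.choose_spec.choose_spec.2 hLp

theorem alpha_eq_univ {L : Set (FreeGroup A)} (hL : L.Nontrivial)
    (h : ¬∃ g p : FreeGroup A, IsPrimitiveElt p ∧ L ⊆ coset g p) : alpha L = Set.univ := by
  rw [alpha, if_neg hL.nonempty.ne_empty, if_neg (not_exists.2 fun _ => hL.ne_singleton),
    dif_neg h]

theorem subset_alpha (L : Set (FreeGroup A)) : L ⊆ alpha L := by
  rcases L.subsingleton_or_nontrivial with hL | hL
  · rw [alpha_of_subsingleton hL]
  by_cases h : ∃ g p : FreeGroup A, IsPrimitiveElt p ∧ L ⊆ coset g p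
  · obtain ⟨g, p, hp, hLp⟩ := h
    rwa [alpha_eq_coset hL hp hLp]
  · rw [alpha_eq_univ hL h]
    exact Set.subset_univ L

theorem alpha_subset_coset {L : Set (FreeGroup A)} {g p : FreeGroup A} (hp : IsPrimitiveElt p)
    (hLp : L ⊆ coset g p) : alpha L ⊆ coset g p := by
  rcases L.subsingleton_or_nontrivial with hL | hL
  · rwa [alpha_of_subsingleton hL]
  · rw [alpha_eq_coset hL hp hLp]

theorem alpha_eq_alpha_of_subset {S T : Set (FreeGroup A)} (hST : S ⊆ T) (hS : S.Nontrivial)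
    (hT : ∀ g p : FreeGroup A, IsPrimitiveElt p → S ⊆ coset g p → T ⊆ coset g p) :
    alpha S = alpha T := by
  by_cases h : ∃ g p : FreeGroup A, IsPrimitiveElt p ∧ S ⊆ coset g p
  · obtain ⟨g, p, hp, hSp⟩ := h
    rw [alpha_eq_coset hS hp hSp, alpha_eq_coset (hS.mono hST) hp (hT g p hp hSp)]
  · rw [alpha_eq_univ hS h, alpha_eq_univ (hS.mono hST)
      fun ⟨g, p, hp, hTp⟩ => h ⟨g, p, hp, hST.trans hTp⟩]

end

theorem stmt14 {A : Type*} (L₁ L₂ : Set (FreeGroup A)) :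
    alpha (L₁ ∪ L₂) = alpha (alpha L₁ ∪ alpha L₂) := by
  rcases (L₁ ∪ L₂).subsingleton_or_nontrivial with h | h
  · rw [alpha_of_subsingleton (h.anti Set.subset_union_left),
      alpha_of_subsingleton (h.anti Set.subset_union_right)]
  · refine alpha_eq_alpha_of_subset (Set.union_subset_union (subset_alpha L₁) (subset_alpha L₂)) h
      fun g p hp hLp => Set.union_subset ?_ ?_
    · exact alpha_subset_coset hp (Set.subset_union_left.trans hLp)
    · exact alpha_subset_coset hp (Set.subset_union_right.trans hLp)
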